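/- arXiv:math/0305143 — 6 statements merged into one kernel-verified Lean document; each statement's English description precedes it below -/
import Mathlib

section
/- Let n ≥ 1, λ > 0, ω ∈ ℝ^n, σ > 0, and v ∈ B_σ(T^n). Then there exists u ∈ B_σ(T^n) (on the same strip T^n_σ, with no loss of analyticity width) such that (−λ + D_ω) u = v on the interior of T^n_σ and |u|_σ ≤ λ^{−1} |v|_σ. -/
open Complex MeasureTheory
open scoped BigOperators

noncomputable section

/-- The complex strip `T^n_σ = {z ∈ ℂ^n : |Im z_j| ≤ σ}`. -/
def TStrip (n : ℕ) (σ : ℝ) : Set (Fin n → ℂ) := {z | ∀ j, |(z j).im| ≤ σ}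

/-- Membership in the space `B_σ(T^n)`: holomorphic in the interior of the strip,
continuous and bounded on the strip, `2π`-periodic in each variable, real on `ℝ^n`. -/
def MemB (n : ℕ) (σ : ℝ) (u : (Fin n → ℂ) → ℂ) : Prop :=
  DifferentiableOn ℂ u (interior (TStrip n σ)) ∧
  ContinuousOn u (TStrip n σ) ∧
  (∀ z ∈ TStrip n σ, ∀ j, u (Function.update z j (z j + 2 * Real.pi)) = u z) ∧
  (∀ φ : Fin n → ℝ, (u (fun j => (φ j : ℂ))).im = 0) ∧
  ∃ M : ℝ, ∀ z ∈ TStrip n σ, ‖u z‖ ≤ M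

/-!
The solution is the Laplace transform along the real flow,
`u z = -∫₀^∞ e^{-λt} v (z + tω) dt`. Real translations preserve the strip, so `u` lives on the same
strip, and `∫₀^∞ e^{-λt} dt = λ⁻¹` gives the bound. Along a flow line
`u (z + sω) = -e^{λs} ∫ₛ^∞ e^{-λt} v (z + tω) dt`, whose derivative at `s = 0` is `λ u z + v z`:
this is the equation. Holomorphy comes from differentiating under the integral sign; the
domination is a Cauchy estimate for `v` on balls of one fixed radius, which by translation
invariance fit inside the strip uniformly along the whole flow line.
-/

open Set Metric Filter

section ExpWeighted

variable {F : Type*} [NormedAddCommGroup F] [NormedSpace ℝ F] {lam M : ℝ} {g : ℝ → F}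

theorem integrableOn_exp_neg_mul_smul (hlam : 0 < lam) (hg : Continuous g)
    (hM : ∀ t, ‖g t‖ ≤ M) (c : ℝ) :
    IntegrableOn (fun t => Real.exp (-lam * t) • g t) (Ioi c) := by
  refine ((exp_neg_integrableOn_Ioi c hlam).mul_const M).mono'
    (by fun_prop : Continuous fun t => Real.exp (-lam * t) • g t).aestronglyMeasurable
    (ae_of_all _ fun t => ?_)
  rw [norm_smul_of_nonneg (Real.exp_nonneg _)]
  gcongr
  exact hM t

theorem norm_integral_exp_neg_mul_smul_le (hlam : 0 < lam) (hM : ∀ t, ‖g t‖ ≤ M) :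
    ‖∫ t in Ioi (0 : ℝ), Real.exp (-lam * t) • g t‖ ≤ lam⁻¹ * M := by
  calc ‖∫ t in Ioi (0 : ℝ), Real.exp (-lam * t) • g t‖
      ≤ ∫ t in Ioi (0 : ℝ), Real.exp (-lam * t) * M := by
        refine norm_integral_le_of_norm_le ((exp_neg_integrableOn_Ioi 0 hlam).mul_const M)
          (ae_of_all _ fun t => ?_)
        rw [norm_smul_of_nonneg (Real.exp_nonneg _)]
        gcongr
        exact hM t
    _ = lam⁻¹ * M := by
        rw [integral_mul_const, integral_exp_mul_Ioi (by linarith) 0]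
        simp

theorem hasDerivAt_integral_Ioi [CompleteSpace F] {f : ℝ → F}
    (hf : ∀ c, IntegrableOn f (Ioi c)) (hc : Continuous f) (s : ℝ) :
    HasDerivAt (fun s => ∫ t in Ioi s, f t) (-f s) s := by
  have hsplit :
      (fun s => ∫ t in Ioi s, f t) = fun s => (∫ t in Ioi 0, f t) - ∫ t in 0..s, f t := by
    funext s
    rw [← intervalIntegral.integral_interval_add_Ioi (hf 0) (hf s)]
    abel
  rw [hsplit]
  exact (hc.integral_hasStrictDerivAt 0 s).hasDerivAt.const_sub _

theorem hasDerivAt_exp_mul_smul_integral_Ioi [CompleteSpace F] (hlam : 0 < lam)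
    (hg : Continuous g) (hM : ∀ t, ‖g t‖ ≤ M) (s : ℝ) :
    HasDerivAt (fun s => Real.exp (lam * s) • ∫ t in Ioi s, Real.exp (-lam * t) • g t)
      (lam • (Real.exp (lam * s) • ∫ t in Ioi s, Real.exp (-lam * t) • g t) - g s) s := by
  have hexp : HasDerivAt (fun s => Real.exp (lam * s)) (Real.exp (lam * s) * lam) s := by
    simpa using ((hasDerivAt_id s).const_mul lam).exp
  have hint := hasDerivAt_integral_Ioi (integrableOn_exp_neg_mul_smul hlam hg hM)
    (by fun_prop) s
  refine (hexp.smul hint).congr_deriv ?_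
  rw [smul_neg, smul_smul, ← Real.exp_add, show lam * s + -lam * s = 0 by ring, Real.exp_zero,
    one_smul, mul_comm, ← smul_smul, sub_eq_add_neg, add_comm]

end ExpWeighted

section FlowResolvent

variable {E : Type*} [NormedAddCommGroup E] [NormedSpace ℂ E]

theorem norm_fderiv_le_of_forall_mem_ball_norm_le {f : E → ℂ} {c : E} {r M : ℝ}
    (hd : DifferentiableOn ℂ f (ball c r)) (hM : ∀ z ∈ ball c r, ‖f z‖ ≤ M) (hr : 0 < r) :
    ‖fderiv ℂ f c‖ ≤ 2 * M / r := by
  refine norm_fderiv_le_div_of_mapsTo_ball hd (fun z hz => ?_) hr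
  rw [mem_closedBall, dist_eq_norm, two_mul]
  exact (norm_sub_le _ _).trans (add_le_add (hM z hz) (hM c (mem_ball_self hr)))

theorem aestronglyMeasurable_fderiv_comp [FiniteDimensional ℂ E] (v : E → ℂ) {γ : ℝ → E}
    (hγ : Continuous γ) {μ : Measure ℝ} : AEStronglyMeasurable (fun t => fderiv ℂ v (γ t)) μ := by
  borelize E (E →L[ℂ] ℂ)
  exact ((measurable_fderiv ℂ v).comp hγ.measurable).aestronglyMeasurable

def flowResolvent (lam : ℝ) (a : E) (v : E → ℂ) (z : E) : ℂ :=
  -∫ t in Ioi (0 : ℝ), Real.exp (-lam * t) • v (z + t • a)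

variable {lam M : ℝ} {a : E} {v : E → ℂ} {S : Set E}

theorem flowResolvent_add_smul (z : E) (s : ℝ) :
    flowResolvent lam a v (z + s • a) =
      -(Real.exp (lam * s) • ∫ t in Ioi s, Real.exp (-lam * t) • v (z + t • a)) := by
  have hshift := (measurePreserving_add_right volume s).setIntegral_preimage_emb
    (measurableEmbedding_addRight s) (fun t => Real.exp (-lam * (t - s)) • v (z + t • a)) (Ioi s)
  simp only [preimage_add_const_Ioi, sub_self, add_sub_cancel_right] at hshift
  rw [flowResolvent, ← integral_smul]
  congr 1
  calc ∫ t in Ioi (0 : ℝ), Real.exp (-lam * t) • v (z + s • a + t • a)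
      = ∫ t in Ioi (0 : ℝ), Real.exp (-lam * t) • v (z + (t + s) • a) := by
        simp only [add_smul, add_assoc, add_comm (s • a)]
    _ = ∫ t in Ioi s, Real.exp (lam * s) • Real.exp (-lam * t) • v (z + t • a) := by
        rw [hshift]
        congr 1 with t
        rw [smul_smul, ← Real.exp_add]
        ring_nf

section Invariant

variable (hS : ∀ z ∈ S, ∀ t : ℝ, z + t • a ∈ S)
include hS

theorem continuous_comp_add_smul (hvc : ContinuousOn v S) {z : E} (hz : z ∈ S) :
    Continuous fun t : ℝ => v (z + t • a) :=
  hvc.comp_continuous (by fun_prop) (hS z hz)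

theorem norm_flowResolvent_le (hlam : 0 < lam) (hM : ∀ z ∈ S, ‖v z‖ ≤ M) {z : E} (hz : z ∈ S) :
    ‖flowResolvent lam a v z‖ ≤ lam⁻¹ * M := by
  rw [flowResolvent, norm_neg]
  exact norm_integral_exp_neg_mul_smul_le hlam fun t => hM _ (hS z hz t)

theorem hasDerivAt_flowResolvent_add_smul (hlam : 0 < lam) (hvc : ContinuousOn v S)
    (hM : ∀ z ∈ S, ‖v z‖ ≤ M) {z : E} (hz : z ∈ S) :
    HasDerivAt (fun s : ℝ => flowResolvent lam a v (z + s • a))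
      (lam * flowResolvent lam a v z + v z) 0 := by
  rw [funext (flowResolvent_add_smul (lam := lam) (v := v) z)]
  refine (hasDerivAt_exp_mul_smul_integral_Ioi hlam (continuous_comp_add_smul hS hvc hz)
    (fun t => hM _ (hS z hz t)) 0).neg.congr_deriv ?_
  rw [mul_zero, Real.exp_zero, one_smul, zero_smul, add_zero, flowResolvent, Complex.real_smul]
  ring

theorem neg_mul_flowResolvent_add_fderiv (hlam : 0 < lam) (hvc : ContinuousOn v S)
    (hM : ∀ z ∈ S, ‖v z‖ ≤ M) {z : E} (hz : z ∈ S)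
    (hd : DifferentiableAt ℂ (flowResolvent lam a v) z) :
    -(lam : ℂ) * flowResolvent lam a v z + fderiv ℂ (flowResolvent lam a v) z a = v z := by
  have hpath : HasDerivAt (fun s : ℝ => z + s • a) a 0 := by
    simpa using ((hasDerivAt_id (0 : ℝ)).smul_const a).const_add z
  have h := (hd.hasFDerivAt.restrictScalars ℝ).comp_hasDerivAt_of_eq 0 hpath (by simp)
  have hderiv := (hasDerivAt_flowResolvent_add_smul hS hlam hvc hM hz).unique h
  rw [ContinuousLinearMap.coe_restrictScalars'] at hderiv
  rw [← hderiv]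
  ring

theorem continuousOn_flowResolvent (hlam : 0 < lam) (hvc : ContinuousOn v S)
    (hM : ∀ z ∈ S, ‖v z‖ ≤ M) : ContinuousOn (flowResolvent lam a v) S := by
  refine (continuousOn_of_dominated (F := fun z t => Real.exp (-lam * t) • v (z + t • a))
    (bound := fun t => Real.exp (-lam * t) * M)
    (fun z hz => ((by fun_prop : Continuous fun t : ℝ => Real.exp (-lam * t)).smul
      (continuous_comp_add_smul hS hvc hz)).aestronglyMeasurable) ?_
    ((exp_neg_integrableOn_Ioi 0 hlam).mul_const M) (ae_of_all _ fun t => ?_)).neg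
  · intro z hz
    refine ae_of_all _ fun t => ?_
    rw [norm_smul_of_nonneg (Real.exp_nonneg _)]
    gcongr
    exact hM _ (hS z hz t)
  · exact (continuousOn_const (c := Real.exp (-lam * t))).smul
      (hvc.comp (by fun_prop) fun z hz => hS z hz t)

theorem flowResolvent_add_of_forall_add_eq {p : E} (hp : ∀ y ∈ S, v (y + p) = v y) {z : E}
    (hz : z ∈ S) : flowResolvent lam a v (z + p) = flowResolvent lam a v z := by
  simp only [flowResolvent, add_right_comm z p, hp _ (hS z hz _)]

theorem exists_pos_ball_add_smul_subset_interior {z₀ : E} (hz₀ : z₀ ∈ interior S) :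
    ∃ r > 0, ∀ z ∈ ball z₀ r, ∀ t : ℝ, ball (z + t • a) r ⊆ interior S := by
  obtain ⟨ε, hε, hball⟩ := Metric.isOpen_iff.1 isOpen_interior z₀ hz₀
  refine ⟨ε / 2, half_pos hε, fun z hz t => ?_⟩
  have hsub : ball (z₀ + t • a) ε ⊆ interior S := by
    refine interior_maximal (fun y hy => ?_) isOpen_ball
    have hy' : y - t • a ∈ S := by
      refine interior_subset (hball ?_)
      rwa [mem_ball, dist_eq_norm, sub_right_comm, sub_sub, ← dist_eq_norm]
    simpa using hS _ hy' t
  refine (ball_subset_ball' ?_).trans hsub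
  rw [dist_add_right]
  linarith [mem_ball.1 hz]

theorem differentiableOn_flowResolvent [FiniteDimensional ℂ E] (hlam : 0 < lam)
    (hvd : DifferentiableOn ℂ v (interior S)) (hvc : ContinuousOn v S)
    (hM : ∀ z ∈ S, ‖v z‖ ≤ M) : DifferentiableOn ℂ (flowResolvent lam a v) (interior S) := by
  intro z₀ hz₀
  obtain ⟨r, hr, hball⟩ := exists_pos_ball_add_smul_subset_interior hS hz₀
  have hmem : ∀ z ∈ ball z₀ r, ∀ t : ℝ, z + t • a ∈ interior S :=
    fun z hz t => hball z hz t (mem_ball_self hr)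
  have hderiv : ∀ z ∈ ball z₀ r, ∀ t : ℝ,
      HasFDerivAt (fun z => Real.exp (-lam * t) • v (z + t • a))
        (Real.exp (-lam * t) • fderiv ℂ v (z + t • a)) z := by
    intro z hz t
    have hv := (hvd.differentiableAt (isOpen_interior.mem_nhds (hmem z hz t))).hasFDerivAt
    exact (hv.comp z ((hasFDerivAt_id z).add_const (t • a))).const_smul (Real.exp (-lam * t))
  have hbound : ∀ z ∈ ball z₀ r, ∀ t : ℝ,
      ‖Real.exp (-lam * t) • fderiv ℂ v (z + t • a)‖ ≤ Real.exp (-lam * t) * (2 * M / r) := by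
    intro z hz t
    rw [norm_smul, Real.norm_of_nonneg (Real.exp_nonneg _)]
    gcongr
    exact norm_fderiv_le_of_forall_mem_ball_norm_le (hvd.mono (hball z hz t))
      (fun y hy => hM y (interior_subset (hball z hz t hy))) hr
  have hmeas : AEStronglyMeasurable (fun t : ℝ => Real.exp (-lam * t) • fderiv ℂ v (z₀ + t • a))
      (volume.restrict (Ioi 0)) := by
    exact (by fun_prop : Continuous fun t : ℝ => Real.exp (-lam * t)).aestronglyMeasurable.smul
      (aestronglyMeasurable_fderiv_comp v (by fun_prop))
  have hz₀S : z₀ ∈ S := interior_subset hz₀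
  have hcont : ∀ z ∈ ball z₀ r, Continuous fun t : ℝ => Real.exp (-lam * t) • v (z + t • a) :=
    fun z hz => (by fun_prop : Continuous fun t : ℝ => Real.exp (-lam * t)).smul
      (continuous_comp_add_smul hS hvc (by simpa using interior_subset (hmem z hz 0)))
  exact (hasFDerivAt_integral_of_dominated_of_fderiv_le
    (F := fun z t => Real.exp (-lam * t) • v (z + t • a))
    (F' := fun z t => Real.exp (-lam * t) • fderiv ℂ v (z + t • a)) (ball_mem_nhds z₀ hr)
    (eventually_of_mem (ball_mem_nhds z₀ hr) fun z hz => (hcont z hz).aestronglyMeasurable)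
    (integrableOn_exp_neg_mul_smul hlam (continuous_comp_add_smul hS hvc hz₀S)
      (fun t => hM _ (hS _ hz₀S t)) 0)
    hmeas (ae_of_all _ fun t z hz => hbound z hz t)
    ((exp_neg_integrableOn_Ioi 0 hlam).mul_const _)
    (ae_of_all _ fun t z hz => hderiv z hz t)).neg.differentiableAt.differentiableWithinAt

end Invariant

theorem im_flowResolvent_eq_zero {z : E} (hv : ∀ t : ℝ, (v (z + t • a)).im = 0) :
    (flowResolvent lam a v z).im = 0 := by
  have hreal : (fun t : ℝ => Real.exp (-lam * t) • v (z + t • a)) =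
      fun t => ((Real.exp (-lam * t) * (v (z + t • a)).re : ℝ) : ℂ) := by
    funext t
    rw [← Complex.re_add_im (v (z + t • a)), hv t]
    simp [Complex.real_smul]
  rw [flowResolvent, hreal, integral_complex_ofReal]
  simp

end FlowResolvent

theorem update_add_eq_add_single {ι M : Type*} [DecidableEq ι] [AddMonoid M] (y : ι → M)
    (j : ι) (c : M) : Function.update y j (y j + c) = y + Pi.single j c := by
  ext k
  rcases eq_or_ne k j with rfl | hk <;> simp [*]

theorem add_real_smul_mem_TStrip {n : ℕ} {σ : ℝ} (ω : Fin n → ℝ) {z : Fin n → ℂ}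
    (hz : z ∈ TStrip n σ) (t : ℝ) : z + t • (fun j => (ω j : ℂ)) ∈ TStrip n σ := by
  intro j
  simpa [Complex.real_smul] using hz j

theorem resolvent_no_loss_general (n : ℕ) (lam : ℝ) (hlam : 0 < lam)
    (ω : Fin n → ℝ) (σ : ℝ)
    (v : (Fin n → ℂ) → ℂ) (hv : MemB n σ v) :
    ∃ u : (Fin n → ℂ) → ℂ, MemB n σ u ∧
      (∀ z ∈ interior (TStrip n σ),
        -(lam : ℂ) * u z + fderiv ℂ u z (fun j => (ω j : ℂ)) = v z) ∧
      ∀ M : ℝ, (∀ z ∈ TStrip n σ, ‖v z‖ ≤ M) →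
        ∀ z ∈ TStrip n σ, ‖u z‖ ≤ lam⁻¹ * M := by
  obtain ⟨hvd, hvc, hvper, hvreal, M, hM⟩ := hv
  have hS := fun z (hz : z ∈ TStrip n σ) => add_real_smul_mem_TStrip ω hz
  have hud := differentiableOn_flowResolvent hS hlam hvd hvc hM
  refine ⟨flowResolvent lam _ v, ⟨hud, continuousOn_flowResolvent hS hlam hvc hM,
    fun z hz j => ?_, fun φ => ?_, _, fun z hz => norm_flowResolvent_le hS hlam hM hz⟩,
    fun z hz => neg_mul_flowResolvent_add_fderiv hS hlam hvc hM (interior_subset hz)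
      (hud.differentiableAt (isOpen_interior.mem_nhds hz)),
    fun M' hM' z hz => norm_flowResolvent_le hS hlam hM' hz⟩
  · rw [update_add_eq_add_single]
    exact flowResolvent_add_of_forall_add_eq hS
      (fun y hy => by rw [← update_add_eq_add_single, hvper y hy j]) hz
  · refine im_flowResolvent_eq_zero fun t => ?_
    convert hvreal (φ + t • ω) using 3
    ext j
    simp [Complex.real_smul]

/-- Proposition A.2: for any `λ > 0` and any `ω ∈ ℝ^n`, the equation
`(−λ + D_ω) u = v` has a solution `u ∈ B_σ(T^n)` on the same strip (no loss of
analyticity width) with `|u|_σ ≤ λ⁻¹ |v|_σ`. -/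
theorem resolvent_no_loss (n : ℕ) (hn : 1 ≤ n) (lam : ℝ) (hlam : 0 < lam)
    (ω : Fin n → ℝ) (σ : ℝ) (hσ : 0 < σ)
    (v : (Fin n → ℂ) → ℂ) (hv : MemB n σ v) :
    ∃ u : (Fin n → ℂ) → ℂ, MemB n σ u ∧
      (∀ z ∈ interior (TStrip n σ),
        -(lam : ℂ) * u z + fderiv ℂ u z (fun j => (ω j : ℂ)) = v z) ∧
      ∀ M : ℝ, (∀ z ∈ TStrip n σ, ‖v z‖ ≤ M) →
        ∀ z ∈ TStrip n σ, ‖u z‖ ≤ lam⁻¹ * M :=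
  resolvent_no_loss_general n lam hlam ω σ v hv
end
end

section
/- Let n ≥ 1, λ > 0, ω ∈ ℝ^n, T, ρ, σ > 0 and M > 0. Let (c_k)_{k∈ℤ^n} ⊂ ℂ be such that the series F(s,φ) = Σ_{k∈ℤ^n} c_k e^{i⟨k, φ − (ω/λ)s⟩} converges absolutely and uniformly on Π_{T,ρ} × T^n_σ, and suppose |F(s,φ)| ≤ M there. Then for every k ∈ ℤ^n one has |c_k| ≤ M exp(−|⟨k,ω⟩| ρ/λ − |k| σ), where |k| = Σ_i |k_i|. -/
/-! Put `s = iρ sign⟨k₀,ω⟩` and `φ_j = x_j - iσ sign k₀_j` with `x ∈ ℝⁿ`. On these points the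
series becomes an absolutely convergent Fourier series in `x` whose `k₀`-th coefficient is
`c_{k₀} exp(|⟨k₀,ω⟩|ρ/λ + |k₀|σ)`, and a Fourier coefficient is bounded by the supremum of the
function, here by `M`. -/

open Complex MeasureTheory Filter
open scoped BigOperators

noncomputable section

/-- The closed rectangle `Π_{T,ρ} = {s ∈ ℂ : |Re s| ≤ T, |Im s| ≤ ρ}`. -/
def Rect (T ρ : ℝ) : Set ℂ := {s | |s.re| ≤ T ∧ |s.im| ≤ ρ}

/-- The general term of the quasi-periodic series
`F(s,φ) = Σ_k c_k e^{i⟨k, φ − (ω/λ)s⟩}`. -/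
def qpTerm (n : ℕ) (lam : ℝ) (ω : Fin n → ℝ) (c : (Fin n → ℤ) → ℂ)
    (k : Fin n → ℤ) (p : ℂ × (Fin n → ℂ)) : ℂ :=
  c k * Complex.exp (Complex.I * ∑ j, (k j : ℂ) * (p.2 j - ((ω j : ℂ) / (lam : ℂ)) * p.1))

open Real

def fundamentalBox (ι : Type*) : Set (ι → ℝ) := Set.univ.pi fun _ => Set.Icc 0 (2 * π)

lemma isCompact_fundamentalBox (ι : Type*) : IsCompact (fundamentalBox ι) :=
  isCompact_univ_pi fun _ => isCompact_Icc

section FourierSeries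

variable {ι : Type*} [Fintype ι]

def expPairing (k : ι → ℤ) (x : ι → ℝ) : ℂ := cexp (∑ j, (k j : ℂ) * x j * I)

lemma expPairing_add (k l : ι → ℤ) (x : ι → ℝ) :
    expPairing (k + l) x = expPairing k x * expPairing l x := by
  simp only [expPairing, ← Complex.exp_add, ← Finset.sum_add_distrib, Pi.add_apply, Int.cast_add,
    add_mul]

lemma norm_expPairing (k : ι → ℤ) (x : ι → ℝ) : ‖expPairing k x‖ = 1 := by
  simp [expPairing, Complex.norm_exp]

@[fun_prop]
lemma continuous_expPairing (k : ι → ℤ) : Continuous (expPairing k) := by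
  unfold expPairing; fun_prop

lemma volume_real_fundamentalBox : volume.real (fundamentalBox ι) = (2 * π) ^ Fintype.card ι := by
  rw [fundamentalBox, Set.pi_univ_Icc, measureReal_def,
    Real.volume_Icc_pi_toReal fun _ => by positivity]
  simp

lemma setIntegral_exp_int_mul_I (m : ℤ) :
    ∫ t in Set.Icc 0 (2 * π), cexp (m * t * I) = if m = 0 then ((2 * π : ℝ) : ℂ) else 0 := by
  rw [integral_Icc_eq_integral_Ioc, ← intervalIntegral.integral_of_le (by positivity)]
  split_ifs with hm
  · simp [hm]
  · have hmI : (m : ℂ) * I ≠ 0 := mul_ne_zero (Int.cast_ne_zero.mpr hm) I_ne_zero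
    simp_rw [mul_right_comm _ _ I]
    rw [integral_exp_mul_complex hmI]
    have : (m : ℂ) * I * ((2 * π : ℝ) : ℂ) = m * (2 * π * I) := by push_cast; ring
    rw [this, exp_int_mul_two_pi_mul_I]
    simp

lemma setIntegral_fundamentalBox_expPairing (k : ι → ℤ) :
    ∫ x in fundamentalBox ι, expPairing k x =
      if k = 0 then (((2 * π) ^ Fintype.card ι : ℝ) : ℂ) else 0 := by
  simp_rw [expPairing, Complex.exp_sum]
  rw [fundamentalBox, volume_pi, Measure.restrict_pi_pi,
    integral_fintype_prod_eq_prod fun j (t : ℝ) => cexp (k j * t * I)]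
  simp_rw [setIntegral_exp_int_mul_I, Finset.prod_ite_zero, funext_iff]
  simp

lemma setIntegral_tsum_mul_expPairing_neg {b : (ι → ℤ) → ℂ} (hb : Summable (‖b ·‖))
    (k₀ : ι → ℤ) :
    ∫ x in fundamentalBox ι, (∑' k, b k * expPairing k x) * expPairing (-k₀) x =
      ((2 * π) ^ Fintype.card ι : ℝ) * b k₀ := by
  calc ∫ x in fundamentalBox ι, (∑' k, b k * expPairing k x) * expPairing (-k₀) x
      = ∫ x in fundamentalBox ι, ∑' k, b k * expPairing (k - k₀) x := by
        simp_rw [← tsum_mul_right, sub_eq_add_neg, expPairing_add, mul_assoc]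
    _ = ∑' k, ∫ x in fundamentalBox ι, b k * expPairing (k - k₀) x := by
        refine (integral_tsum_of_summable_integral_norm
          (fun k => (continuous_const.mul (continuous_expPairing _)).continuousOn
            |>.integrableOn_compact (isCompact_fundamentalBox ι)) ?_).symm
        simpa [norm_expPairing] using hb.mul_left _
    _ = ((2 * π) ^ Fintype.card ι : ℝ) * b k₀ := by
        simp_rw [integral_const_mul, setIntegral_fundamentalBox_expPairing, sub_eq_zero]
        rw [tsum_eq_single k₀ fun k hk => by simp [hk]]
        simp [mul_comm]

theorem norm_le_of_forall_norm_tsum_mul_expPairing_le {b : (ι → ℤ) → ℂ}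
    (hb : Summable (‖b ·‖)) {M : ℝ} (hM : ∀ x, ‖∑' k, b k * expPairing k x‖ ≤ M)
    (k₀ : ι → ℤ) : ‖b k₀‖ ≤ M := by
  have hvol : 0 < (2 * π) ^ Fintype.card ι := by positivity
  refine le_of_mul_le_mul_left ?_ hvol
  calc (2 * π) ^ Fintype.card ι * ‖b k₀‖
      = ‖∫ x in fundamentalBox ι, (∑' k, b k * expPairing k x) * expPairing (-k₀) x‖ := by
        rw [setIntegral_tsum_mul_expPairing_neg hb, norm_mul, Complex.norm_real,
          Real.norm_of_nonneg hvol.le]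
    _ ≤ M * volume.real (fundamentalBox ι) := by
        refine norm_setIntegral_le_of_norm_le_const (isCompact_fundamentalBox ι).measure_lt_top
          fun x _ => ?_
        rw [norm_mul, norm_expPairing, mul_one]
        exact hM x
    _ = (2 * π) ^ Fintype.card ι * M := by rw [volume_real_fundamentalBox, mul_comm]

end FourierSeries

lemma abs_sign_mul_le {α : Type*} [Ring α] [LinearOrder α] [IsStrictOrderedRing α] (x : α)
    {a : α} (ha : 0 ≤ a) : |(SignType.sign x : α) * a| ≤ a := by
  rcases lt_trichotomy x 0 with hx | rfl | hx <;> simp [*, abs_of_nonneg]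

lemma qpTerm_imaginary_shift (n : ℕ) (lam : ℝ) (ω : Fin n → ℝ) (c : (Fin n → ℤ) → ℂ)
    (k : Fin n → ℤ) (s : ℝ) (η x : Fin n → ℝ) :
    qpTerm n lam ω c k (s * I, fun j => x j + η j * I) =
      c k * Real.exp ((∑ j, (k j : ℝ) * ω j) * s / lam - ∑ j, (k j : ℝ) * η j) *
        expPairing k x := by
  rw [qpTerm, expPairing, Complex.ofReal_exp, mul_assoc, ← Complex.exp_add]
  congr 2
  push_cast
  simp_rw [Finset.mul_sum, Finset.sum_mul, Finset.sum_div, ← Finset.sum_sub_distrib,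
    ← Finset.sum_add_distrib]
  refine Finset.sum_congr rfl fun j _ => ?_
  linear_combination ((k j : ℂ) * η j - k j * ω j / lam * s) * I_sq

theorem quasiperiodic_coeff_bound_general (n : ℕ)
    (lam : ℝ) (ω : Fin n → ℝ)
    (T ρ σ M : ℝ) (hT : 0 < T) (hρ : 0 < ρ) (hσ : 0 < σ)
    (c : (Fin n → ℤ) → ℂ)
    (habs : ∀ p ∈ Rect T ρ ×ˢ TStrip n σ,
      Summable (fun k : Fin n → ℤ => ‖qpTerm n lam ω c k p‖))
    (hbd : ∀ p ∈ Rect T ρ ×ˢ TStrip n σ,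
      ‖∑' k : Fin n → ℤ, qpTerm n lam ω c k p‖ ≤ M) :
    ∀ k : Fin n → ℤ,
      ‖c k‖ ≤ M * Real.exp (-(|∑ j, (k j : ℝ) * ω j| * ρ / lam) - (∑ j, |(k j : ℝ)|) * σ) := by
  intro k₀
  set s : ℝ := SignType.sign (∑ j, (k₀ j : ℝ) * ω j) * ρ
  set η : Fin n → ℝ := fun j => -(SignType.sign (k₀ j : ℝ) * σ)
  have hmem (x : Fin n → ℝ) :
      ((s : ℂ) * I, fun j => (x j : ℂ) + η j * I) ∈ Rect T ρ ×ˢ TStrip n σ := by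
    refine ⟨⟨by simpa using hT.le, ?_⟩, fun j => ?_⟩
    · simpa [s] using abs_sign_mul_le (∑ j, (k₀ j : ℝ) * ω j) hρ.le
    · simpa [η] using abs_sign_mul_le (k₀ j : ℝ) hσ.le
  set b : (Fin n → ℤ) → ℂ := fun k =>
    c k * Real.exp ((∑ j, (k j : ℝ) * ω j) * s / lam - ∑ j, (k j : ℝ) * η j)
  have hterm := qpTerm_imaginary_shift n lam ω c
  have hb : Summable (‖b ·‖) := by
    refine (habs _ (hmem 0)).congr fun k => ?_
    rw [hterm, norm_mul, norm_expPairing, mul_one]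
  have hbk₀ : ‖b k₀‖ ≤ M := norm_le_of_forall_norm_tsum_mul_expPairing_le hb
    (fun x => by simpa only [hterm] using hbd _ (hmem x)) k₀
  have hexponent : (∑ j, (k₀ j : ℝ) * ω j) * s / lam - ∑ j, (k₀ j : ℝ) * η j =
      |∑ j, (k₀ j : ℝ) * ω j| * ρ / lam + (∑ j, |(k₀ j : ℝ)|) * σ := by
    simp only [s, η, ← mul_assoc, self_mul_sign, mul_neg, Finset.sum_neg_distrib,
      Finset.sum_mul, sub_neg_eq_add]
  rw [← neg_add', Real.exp_neg, ← div_eq_mul_inv, le_div_iff₀ (Real.exp_pos _), ← hexponent]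
  simpa only [b, norm_mul, Complex.norm_real, Real.norm_of_nonneg (Real.exp_pos _).le] using hbk₀

/-- The Fourier-coefficient estimate (4.14)–(4.15): if the quasi-periodic series
`F(s,φ) = Σ_k c_k e^{i⟨k, φ − (ω/λ)s⟩}` converges absolutely and uniformly on
`Π_{T,ρ} × T^n_σ` and is bounded by `M` there, then
`|c_k| ≤ M exp(−|⟨k,ω⟩|ρ/λ − |k|σ)`. -/
theorem quasiperiodic_coeff_bound (n : ℕ) (hn : 1 ≤ n)
    (lam : ℝ) (hlam : 0 < lam) (ω : Fin n → ℝ)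
    (T ρ σ M : ℝ) (hT : 0 < T) (hρ : 0 < ρ) (hσ : 0 < σ) (hM : 0 < M)
    (c : (Fin n → ℤ) → ℂ)
    (habs : ∀ p ∈ Rect T ρ ×ˢ TStrip n σ,
      Summable (fun k : Fin n → ℤ => ‖qpTerm n lam ω c k p‖))
    (hunif : TendstoUniformlyOn
      (fun (F : Finset (Fin n → ℤ)) (p : ℂ × (Fin n → ℂ)) => ∑ k ∈ F, qpTerm n lam ω c k p)
      (fun p => ∑' k : Fin n → ℤ, qpTerm n lam ω c k p)
      atTop (Rect T ρ ×ˢ TStrip n σ))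
    (hbd : ∀ p ∈ Rect T ρ ×ˢ TStrip n σ,
      ‖∑' k : Fin n → ℤ, qpTerm n lam ω c k p‖ ≤ M) :
    ∀ k : Fin n → ℤ,
      ‖c k‖ ≤ M * Real.exp (-(|∑ j, (k j : ℝ) * ω j| * ρ / lam) - (∑ j, |(k j : ℝ)|) * σ) :=
  quasiperiodic_coeff_bound_general n lam ω T ρ σ M hT hρ hσ c habs hbd
end
end

section
/- Let m ≥ 1 and let H₀ : ℝ^m → ℝ be twice differentiable at p₀ with positive definite Hessian D²H₀(p₀). Let k₀ ∈ ℝ^m ∖ {0} with ⟨k₀, ∇H₀(p₀)⟩ = 0, and suppose ∇H₀(p₀) ≠ 0. Then the vectors ∇H₀(p₀) and D²H₀(p₀) k₀ are linearly independent. -/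
open scoped RealInnerProductSpace

noncomputable section

/-- Transversality of the resonant hypersurface: if `H₀` is twice differentiable at
`p₀` (the Hessian being `A`, the derivative of the gradient map at `p₀`) with `A`
positive definite, `k₀ ≠ 0` satisfies the resonance relation `⟨k₀, ∇H₀(p₀)⟩ = 0`,
and `∇H₀(p₀) ≠ 0`, then `∇H₀(p₀)` and `A k₀ = D²H₀(p₀) k₀` are linearly
independent. -/
theorem resonant_hypersurface_transversal (m : ℕ) (hm : 1 ≤ m)
    (H₀ : EuclideanSpace ℝ (Fin m) → ℝ) (p₀ : EuclideanSpace ℝ (Fin m))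
    (A : EuclideanSpace ℝ (Fin m) →L[ℝ] EuclideanSpace ℝ (Fin m))
    (hA : HasFDerivAt (gradient H₀) A p₀)
    (hpos : ∀ v : EuclideanSpace ℝ (Fin m), v ≠ 0 → 0 < ⟪A v, v⟫)
    (k₀ : EuclideanSpace ℝ (Fin m)) (hk₀ : k₀ ≠ 0)
    (hres : ⟪k₀, gradient H₀ p₀⟫ = 0)
    (hgrad : gradient H₀ p₀ ≠ 0) :
    LinearIndependent ℝ ![gradient H₀ p₀, A k₀] := by
  set g := gradient H₀ p₀ with hg
  have hAk : 0 < ⟪A k₀, k₀⟫ := hpos k₀ hk₀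
  rw [LinearIndependent.pair_iff]
  intro s t hst
  have h1 : ⟪s • g + t • A k₀, k₀⟫ = 0 := by rw [hst]; simp
  have hgk : ⟪g, k₀⟫ = 0 := by rw [real_inner_comm]; exact hres
  rw [inner_add_left, inner_smul_left, inner_smul_left, hgk] at h1
  simp only [RCLike.star_def, conj_trivial, mul_zero, zero_add] at h1
  have ht : t = 0 := by
    rcases mul_eq_zero.mp h1 with h | h
    · exact h
    · exact absurd h (ne_of_gt hAk)
  subst ht
  simp only [zero_smul, add_zero, smul_eq_zero] at hst
  rcases hst with h | h
  · exact ⟨h, rfl⟩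
  · exact absurd h hgrad
end
end

section
/- Let U₁ : ℝ → ℝ be real-analytic and 2π-periodic with U₁(0) = 0, U₁′(0) = 0, U₁″(0) = −1, and U₁(x) < 0 for all x ∈ (0, 2π). Then there exists a real-analytic 2π-periodic function V : ℝ → ℝ with V(x) > 0 for all x ∈ ℝ, V(0) = 1, and U₁(x) = (cos x − 1) V(x) for all x ∈ ℝ. -/
/-!
Take `V = U₁ / (cos - 1)`, set to `1` on `2πℤ`. Off `2πℤ` both `U₁` and `cos - 1` are negative
(reduce modulo `2π`), so `V` is positive and analytic there. At `0` both functions have a double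
zero with second derivative `-1`; writing each as `z² g z` with `g` analytic (Taylor), the
quotient has a removable singularity of value `1`, and periodicity carries analyticity to all
of `2πℤ`.
-/

open Filter Topology Real

section DoubleZero

variable {𝕜 : Type*} [NontriviallyNormedField 𝕜] [CharZero 𝕜]

theorem AnalyticAt.exists_eq_sq_smul {E : Type*} [NormedAddCommGroup E] [NormedSpace 𝕜 E]
    [CompleteSpace E] {f : 𝕜 → E} (hf : AnalyticAt 𝕜 f 0) (h0 : f 0 = 0)
    (h1 : deriv f 0 = 0) :
    ∃ g : 𝕜 → E, AnalyticAt 𝕜 g 0 ∧ g 0 = (2 : 𝕜)⁻¹ • deriv (deriv f) 0 ∧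
      ∀ z, f z = z ^ 2 • g z := by
  obtain ⟨F, hF, hfF⟩ := hf.exists_eq_sum_add_pow_mul 3
  refine ⟨fun z ↦ (2 : 𝕜)⁻¹ • deriv (deriv f) 0 + z • F z, by fun_prop, by simp, fun z ↦ ?_⟩
  rw [hfF z]
  simp only [Finset.sum_range_succ, Finset.sum_range_zero, iteratedDeriv_succ, iteratedDeriv_zero,
    h0, h1, Nat.factorial, smul_zero, zero_add]
  module

theorem analyticAt_update_div_of_double_zero [CompleteSpace 𝕜] [DecidableEq 𝕜] {f g : 𝕜 → 𝕜}
    (hf : AnalyticAt 𝕜 f 0) (hg : AnalyticAt 𝕜 g 0) (hf0 : f 0 = 0) (hf1 : deriv f 0 = 0)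
    (hg0 : g 0 = 0) (hg1 : deriv g 0 = 0) (hg2 : deriv (deriv g) 0 ≠ 0) :
    AnalyticAt 𝕜
      (Function.update (fun z ↦ f z / g z) 0 (deriv (deriv f) 0 / deriv (deriv g) 0)) 0 := by
  obtain ⟨φ, hφ, hφ0, hfφ⟩ := hf.exists_eq_sq_smul hf0 hf1
  obtain ⟨ψ, hψ, hψ0, hgψ⟩ := hg.exists_eq_sq_smul hg0 hg1
  have hψ0_ne : ψ 0 ≠ 0 := by simpa [hψ0] using hg2
  refine (hφ.div hψ hψ0_ne).congr (.of_forall fun z ↦ ?_)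
  rcases eq_or_ne z 0 with rfl | hz
  · simp [hφ0, hψ0, mul_div_mul_left]
  · simp only [Function.update_of_ne hz, hfφ, hgψ, smul_eq_mul, Pi.div_apply]
    exact (mul_div_mul_left _ _ (pow_ne_zero 2 hz)).symm

end DoubleZero

theorem Function.Periodic.analyticAt_int_mul_add {𝕜 E : Type*} [NontriviallyNormedField 𝕜]
    [NormedAddCommGroup E] [NormedSpace 𝕜 E] {f : 𝕜 → E} {c a : 𝕜}
    (hper : Function.Periodic f c) (hf : AnalyticAt 𝕜 f a) (n : ℤ) :
    AnalyticAt 𝕜 f (n * c + a) := by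
  have hcomp : AnalyticAt 𝕜 (f ∘ fun z ↦ z - n * c) (n * c + a) :=
    AnalyticAt.comp (by simpa using hf) (by fun_prop)
  exact hcomp.congr (.of_forall fun z ↦ hper.sub_int_mul_eq n)

theorem Function.Periodic.neg_of_forall_ne_int_mul {f : ℝ → ℝ} {p x : ℝ}
    (hper : Function.Periodic f p) (hp : 0 < p) (hneg : ∀ y ∈ Set.Ioo 0 p, f y < 0)
    (hx : ∀ n : ℤ, n * p ≠ x) : f x < 0 := by
  have hmem := toIcoMod_mem_Ico' hp x
  rw [← self_sub_toIcoDiv_zsmul, zsmul_eq_mul] at hmem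
  rw [← hper.sub_int_mul_eq (toIcoDiv hp 0 x)]
  refine hneg _ ⟨hmem.1.lt_of_ne fun h ↦ hx (toIcoDiv hp 0 x) ?_, hmem.2⟩
  linarith

noncomputable def divCosSubOne (U : ℝ → ℝ) (x : ℝ) : ℝ :=
  if cos x = 1 then 1 else U x / (cos x - 1)

section DivCosSubOne

variable {U : ℝ → ℝ}

theorem divCosSubOne_zero : divCosSubOne U 0 = 1 := by
  simp [divCosSubOne]

theorem divCosSubOne_periodic (hper : Function.Periodic U (2 * π)) :
    Function.Periodic (divCosSubOne U) (2 * π) := fun x ↦ by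
  simp only [divCosSubOne, cos_add_two_pi, hper x]

theorem cos_sub_one_mul_divCosSubOne (hper : Function.Periodic U (2 * π)) (h0 : U 0 = 0)
    (x : ℝ) : (cos x - 1) * divCosSubOne U x = U x := by
  by_cases hx : cos x = 1
  · obtain ⟨n, rfl⟩ := (cos_eq_one_iff x).mp hx
    simp [hx, hper.int_mul_eq, h0]
  · simp only [divCosSubOne, if_neg hx]
    exact mul_div_cancel₀ _ (sub_ne_zero.mpr hx)

theorem divCosSubOne_pos (hper : Function.Periodic U (2 * π))
    (hneg : ∀ x ∈ Set.Ioo 0 (2 * π), U x < 0) (x : ℝ) : 0 < divCosSubOne U x := by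
  by_cases hx : cos x = 1
  · simp [divCosSubOne, hx]
  · have hUx : U x < 0 := hper.neg_of_forall_ne_int_mul two_pi_pos hneg fun n hn ↦
      hx ((cos_eq_one_iff x).mpr ⟨n, hn⟩)
    simp only [divCosSubOne, if_neg hx]
    exact div_pos_of_neg_of_neg hUx (sub_neg.mpr ((cos_le_one x).lt_of_ne hx))

theorem divCosSubOne_eventuallyEq_update :
    divCosSubOne U =ᶠ[𝓝 0] Function.update (fun x ↦ U x / (cos x - 1)) 0 1 := by
  filter_upwards [Ioo_mem_nhds (neg_lt_zero.mpr two_pi_pos) two_pi_pos] with x hx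
  rcases eq_or_ne x 0 with rfl | hx0
  · simp [divCosSubOne]
  · rw [Function.update_of_ne hx0, divCosSubOne, if_neg]
    rwa [cos_eq_one_iff_of_lt_of_lt hx.1 hx.2]

theorem analyticAt_divCosSubOne (hA : ∀ x, AnalyticAt ℝ U x)
    (hper : Function.Periodic U (2 * π)) (h0 : U 0 = 0) (h1 : deriv U 0 = 0)
    (h2 : deriv (deriv U) 0 = -1) (x : ℝ) : AnalyticAt ℝ (divCosSubOne U) x := by
  by_cases hx : cos x = 1
  · have hV0 : AnalyticAt ℝ (divCosSubOne U) 0 := by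
      have := analyticAt_update_div_of_double_zero (hA 0) (g := fun x ↦ cos x - 1)
        (by fun_prop) h0 h1 (by simp) (by simp) (by simp)
      have hc2 : deriv (deriv fun x ↦ cos x - 1) 0 = -1 := by simp
      rw [h2, hc2, neg_div_neg_eq, div_one] at this
      exact this.congr divCosSubOne_eventuallyEq_update.symm
    obtain ⟨n, rfl⟩ := (cos_eq_one_iff x).mp hx
    simpa using (divCosSubOne_periodic hper).analyticAt_int_mul_add hV0 n
  · refine ((hA x).div (analyticAt_cos.sub analyticAt_const) (sub_ne_zero.mpr hx)).congr ?_
    filter_upwards [continuous_cos.continuousAt.eventually_ne hx] with y hy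
    simp [divCosSubOne, hy]

end DivCosSubOne

/-- Factorization of the potential at a simple resonance: a real-analytic
`2π`-periodic potential `U₁` with a nondegenerate absolute maximum `U₁(0) = 0`
(normalized: `U₁″(0) = −1`) and `U₁ < 0` on `(0, 2π)` factors as
`U₁(x) = (cos x − 1) V(x)` with `V` real-analytic, `2π`-periodic, everywhere
positive, and `V(0) = 1`. -/
theorem potential_factorization
    (U₁ : ℝ → ℝ) (hA : ∀ x, AnalyticAt ℝ U₁ x)
    (hper : Function.Periodic U₁ (2 * Real.pi))
    (h0 : U₁ 0 = 0) (h1 : deriv U₁ 0 = 0) (h2 : deriv (deriv U₁) 0 = -1)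
    (hneg : ∀ x ∈ Set.Ioo 0 (2 * Real.pi), U₁ x < 0) :
    ∃ V : ℝ → ℝ, (∀ x, AnalyticAt ℝ V x) ∧
      Function.Periodic V (2 * Real.pi) ∧
      (∀ x, 0 < V x) ∧ V 0 = 1 ∧
      ∀ x, U₁ x = (Real.cos x - 1) * V x :=
  ⟨divCosSubOne U₁, analyticAt_divCosSubOne hA hper h0 h1 h2, divCosSubOne_periodic hper,
    divCosSubOne_pos hper hneg, divCosSubOne_zero,
    fun x ↦ (cos_sub_one_mul_divCosSubOne hper h0 x).symm⟩
end

section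
/- Let U₁ : ℝ → ℝ be real-analytic and 2π-periodic with U₁(0) = 0, U₁′(0) = 0, U₁″(0) = −1, and U₁(x) < 0 for all x ∈ (0, 2π). Then there exists a real-analytic 2π-periodic function ψ₁ : ℝ → ℝ with ψ₁(0) = 1 and ψ₁(x) > 0 for all x, such that the function ψ(x) := 2 sin(x/2) ψ₁(x) satisfies: ψ(x)² = −2 U₁(x) for all x ∈ ℝ; ψ(x + 2π) = −ψ(x) for all x (2π-antiperiodicity, hence 4π-periodicity); ψ(0) = 0 and ψ′(0) = 1; ψ(x) ≥ 0 on [0, 2π]; and ψ(x) = 0 if and only if x ∈ 2πℤ. -/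
/-! Off the zeros `2πℤ` of `sin (x / 2)`, `ψ₁²` has to be `-U₁ / (2 sin² (x / 2))`, which is
positive since `U₁ < 0` on `(0, 2π)` and `U₁` is `2π`-periodic. At `0` numerator and denominator
both vanish to second order, `U₁ = x² g` with `g 0 = U₁″(0) / 2 = -1/2` and `sin (x / 2) = x d`
with `d 0 = 1/2`, so the quotient extends analytically by the value `1`; periodicity carries this
to all of `2πℤ`. Then `ψ₁` is the square root of a positive analytic function, and the sign,
antiperiodicity and zeros of `ψ` are those of the factor `sin (x / 2)`. -/

open Real Function Filter Topology

section Analytic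

variable {𝕜 E : Type*} [NontriviallyNormedField 𝕜] [NormedAddCommGroup E] [NormedSpace 𝕜 E]

theorem Function.Periodic.analyticAt_add_int_mul {f : 𝕜 → E} {c x : 𝕜} (h : Periodic f c)
    (hf : AnalyticAt 𝕜 f x) (k : ℤ) : AnalyticAt 𝕜 f (x + k * c) := by
  simpa only [h.sub_int_mul_eq] using hf.comp_sub (k * c)

variable [CharZero 𝕜] [CompleteSpace E]

theorem AnalyticAt.exists_eq_smul_of_eq_zero {f : 𝕜 → E} (hf : AnalyticAt 𝕜 f 0)
    (h0 : f 0 = 0) : ∃ g : 𝕜 → E, AnalyticAt 𝕜 g 0 ∧ g 0 = deriv f 0 ∧ ∀ z, f z = z • g z := by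
  obtain ⟨F, hF, hf⟩ := hf.exists_eq_sum_add_pow_mul 2
  refine ⟨fun z => deriv f 0 + z • F z, by fun_prop, by simp, fun z => ?_⟩
  rw [hf z]
  simp [Finset.sum_range_succ, h0, smul_add, smul_smul, pow_two]

theorem AnalyticAt.exists_eq_sq_smul_of_eq_zero {f : 𝕜 → E} (hf : AnalyticAt 𝕜 f 0)
    (h0 : f 0 = 0) (h1 : deriv f 0 = 0) :
    ∃ g : 𝕜 → E, AnalyticAt 𝕜 g 0 ∧ g 0 = (2 : 𝕜)⁻¹ • deriv (deriv f) 0 ∧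
      ∀ z, f z = z ^ 2 • g z := by
  obtain ⟨F, hF, hf⟩ := hf.exists_eq_sum_add_pow_mul 3
  refine ⟨fun z => (2 : 𝕜)⁻¹ • deriv (deriv f) 0 + z • F z, by fun_prop, by simp, fun z => ?_⟩
  rw [hf z]
  simp [Finset.sum_range_succ, h0, h1, iteratedDeriv_succ, smul_add, smul_smul, pow_succ,
    div_eq_mul_inv]

end Analytic

theorem Real.sin_half_eq_zero_iff {x : ℝ} : sin (x / 2) = 0 ↔ ∃ k : ℤ, x = 2 * π * k := by
  rw [sin_eq_zero_iff]
  exact exists_congr fun k => by constructor <;> intro h <;> linarith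

theorem Real.sin_half_antiperiodic : Antiperiodic (fun x => sin (x / 2)) (2 * π) := by
  simpa only [mul_comm π] using sin_antiperiodic.div_inv two_ne_zero

theorem Real.sin_half_ne_zero_of_mem_Ioo {x : ℝ} (hx : x ∈ Set.Ioo (-(2 * π)) (2 * π))
    (hx0 : x ≠ 0) : sin (x / 2) ≠ 0 := by
  rw [Ne, sin_eq_zero_iff_of_lt_of_lt (by linarith [hx.1]) (by linarith [hx.2])]
  exact fun h => hx0 (by linarith)

section SinHalfMul

variable {h : ℝ → ℝ}

theorem antiperiodic_two_mul_sin_half_mul (hper : Periodic h (2 * π)) :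
    Antiperiodic (fun x => 2 * sin (x / 2) * h x) (2 * π) := fun x => by
  simp only [sin_half_antiperiodic x, hper x]
  ring

theorem two_mul_sin_half_mul_eq_zero_iff (hpos : ∀ x, 0 < h x) (x : ℝ) :
    2 * sin (x / 2) * h x = 0 ↔ ∃ k : ℤ, x = 2 * π * k := by
  simp [(hpos x).ne', sin_half_eq_zero_iff]

theorem two_mul_sin_half_mul_nonneg (hnonneg : ∀ x, 0 ≤ h x) {x : ℝ}
    (hx : x ∈ Set.Icc 0 (2 * π)) : 0 ≤ 2 * sin (x / 2) * h x := by
  have := sin_nonneg_of_nonneg_of_le_pi (x := x / 2) (by linarith [hx.1]) (by linarith [hx.2])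
  have := hnonneg x
  positivity

theorem deriv_two_mul_sin_half_mul_zero (hd : DifferentiableAt ℝ h 0) :
    deriv (fun x => 2 * sin (x / 2) * h x) 0 = h 0 := by
  have hsin : HasDerivAt (fun x : ℝ => 2 * sin (x / 2)) 1 0 := by
    simpa using (((hasDerivAt_id (0 : ℝ)).div_const 2).sin).const_mul 2
  simpa using (hsin.fun_mul hd.hasDerivAt).deriv

end SinHalfMul

section Potential

variable {U : ℝ → ℝ}

theorem Function.Periodic.eq_zero_of_sin_half_eq_zero (hper : Periodic U (2 * π)) (h0 : U 0 = 0)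
    {x : ℝ} (hx : sin (x / 2) = 0) : U x = 0 := by
  obtain ⟨k, rfl⟩ := sin_half_eq_zero_iff.1 hx
  simpa only [mul_comm] using (hper.int_mul_eq k).trans h0

theorem Function.Periodic.neg_of_sin_half_ne_zero (hper : Periodic U (2 * π))
    (hneg : ∀ x ∈ Set.Ioo 0 (2 * π), U x < 0) {x : ℝ} (hx : sin (x / 2) ≠ 0) : U x < 0 := by
  obtain ⟨m, hm, -⟩ := existsUnique_sub_zsmul_mem_Ico two_pi_pos x 0
  rw [zero_add] at hm
  have hm0 : x - m • (2 * π) ≠ 0 := fun h =>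
    hx (sin_half_eq_zero_iff.2 ⟨m, by rw [zsmul_eq_mul] at h; linarith⟩)
  rw [← hper.sub_zsmul_eq m]
  exact hneg _ ⟨hm.1.lt_of_ne' hm0, hm.2⟩

/-- The square of the paper's `ψ₁`. The value `1` at the zeros of `sin (x / 2)` is the
removable-singularity value `-U″(0) / 2` for the normalization `U″(0) = -1`. -/
noncomputable def separatrixFactorSq (U : ℝ → ℝ) (x : ℝ) : ℝ :=
  if sin (x / 2) = 0 then 1 else -U x / (2 * sin (x / 2) ^ 2)

theorem separatrixFactorSq_of_sin_half_ne_zero {x : ℝ} (hx : sin (x / 2) ≠ 0) :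
    separatrixFactorSq U x = -U x / (2 * sin (x / 2) ^ 2) :=
  if_neg hx

theorem separatrixFactorSq_zero : separatrixFactorSq U 0 = 1 := by
  simp [separatrixFactorSq]

theorem separatrixFactorSq_periodic (hper : Periodic U (2 * π)) :
    Periodic (separatrixFactorSq U) (2 * π) := fun x => by
  simp only [separatrixFactorSq, sin_half_antiperiodic x, neg_eq_zero, neg_sq, hper x]

theorem separatrixFactorSq_pos (hper : Periodic U (2 * π))
    (hneg : ∀ x ∈ Set.Ioo 0 (2 * π), U x < 0) (x : ℝ) : 0 < separatrixFactorSq U x := by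
  by_cases hx : sin (x / 2) = 0
  · simp [separatrixFactorSq, hx]
  · rw [separatrixFactorSq_of_sin_half_ne_zero hx]
    exact div_pos (neg_pos.2 (hper.neg_of_sin_half_ne_zero hneg hx)) (by positivity)

theorem two_mul_sin_half_sq_mul_separatrixFactorSq (hper : Periodic U (2 * π)) (h0 : U 0 = 0)
    (x : ℝ) : 2 * sin (x / 2) ^ 2 * separatrixFactorSq U x = -U x := by
  by_cases hx : sin (x / 2) = 0
  · simp [hx, hper.eq_zero_of_sin_half_eq_zero h0 hx]
  · rw [separatrixFactorSq_of_sin_half_ne_zero hx]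
    field_simp

theorem analyticAt_separatrixFactorSq_zero (hA : AnalyticAt ℝ U 0) (h0 : U 0 = 0)
    (h1 : deriv U 0 = 0) (h2 : deriv (deriv U) 0 = -1) :
    AnalyticAt ℝ (separatrixFactorSq U) 0 := by
  obtain ⟨g, hg, hg0, hUg⟩ := hA.exists_eq_sq_smul_of_eq_zero h0 h1
  have hsin : AnalyticAt ℝ (fun x => sin (x / 2)) 0 := by fun_prop
  obtain ⟨d, hd, hd0, hsd⟩ := hsin.exists_eq_smul_of_eq_zero (by simp)
  replace hd0 : d 0 = 1 / 2 := by simp [hd0]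
  replace hg0 : g 0 = -(1 / 2) := by simp [hg0, h2]
  have heq : separatrixFactorSq U =ᶠ[𝓝 0] fun x => -g x / (2 * d x ^ 2) := by
    filter_upwards [Ioo_mem_nhds (neg_neg_of_pos two_pi_pos) two_pi_pos] with x hx
    rcases eq_or_ne x 0 with rfl | hx0
    · rw [separatrixFactorSq_zero, hg0, hd0]
      norm_num
    · have hsx := sin_half_ne_zero_of_mem_Ioo hx hx0
      have hdx : d x ≠ 0 := right_ne_zero_of_mul (by simpa only [hsd x, smul_eq_mul] using hsx)
      rw [separatrixFactorSq_of_sin_half_ne_zero hsx, hUg x, hsd x, smul_eq_mul, smul_eq_mul]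
      field_simp
  refine (hg.neg.div (analyticAt_const.mul (hd.pow 2)) ?_).congr heq.symm
  simp [hd0]

theorem analyticAt_separatrixFactorSq (hA : ∀ x, AnalyticAt ℝ U x) (hper : Periodic U (2 * π))
    (h0 : U 0 = 0) (h1 : deriv U 0 = 0) (h2 : deriv (deriv U) 0 = -1) (x : ℝ) :
    AnalyticAt ℝ (separatrixFactorSq U) x := by
  by_cases hx : sin (x / 2) = 0
  · obtain ⟨k, rfl⟩ := sin_half_eq_zero_iff.1 hx
    simpa only [zero_add, mul_comm] using (separatrixFactorSq_periodic hper).analyticAt_add_int_mul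
      (analyticAt_separatrixFactorSq_zero (hA 0) h0 h1 h2) k
  · have hquot : AnalyticAt ℝ (fun y => -U y / (2 * sin (y / 2) ^ 2)) x :=
      (hA x).neg.div (by fun_prop) (by positivity)
    refine hquot.congr ?_
    have hopen : IsOpen {y : ℝ | sin (y / 2) ≠ 0} :=
      isOpen_ne_fun (by fun_prop) continuous_const
    filter_upwards [hopen.mem_nhds hx] with y hy
    exact (separatrixFactorSq_of_sin_half_ne_zero hy).symm

noncomputable def separatrixFactor (U : ℝ → ℝ) (x : ℝ) : ℝ :=
  √(separatrixFactorSq U x)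

theorem separatrixFactor_zero : separatrixFactor U 0 = 1 := by
  simp [separatrixFactor, separatrixFactorSq_zero]

theorem separatrixFactor_periodic (hper : Periodic U (2 * π)) :
    Periodic (separatrixFactor U) (2 * π) :=
  (separatrixFactorSq_periodic hper).comp _

theorem separatrixFactor_pos (hper : Periodic U (2 * π))
    (hneg : ∀ x ∈ Set.Ioo 0 (2 * π), U x < 0) (x : ℝ) : 0 < separatrixFactor U x :=
  sqrt_pos.2 (separatrixFactorSq_pos hper hneg x)

theorem analyticAt_separatrixFactor (hA : ∀ x, AnalyticAt ℝ U x) (hper : Periodic U (2 * π))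
    (h0 : U 0 = 0) (h1 : deriv U 0 = 0) (h2 : deriv (deriv U) 0 = -1)
    (hneg : ∀ x ∈ Set.Ioo 0 (2 * π), U x < 0) (x : ℝ) :
    AnalyticAt ℝ (separatrixFactor U) x :=
  ((analyticAt_separatrixFactorSq hA hper h0 h1 h2 x).contDiffAt.sqrt
    (separatrixFactorSq_pos hper hneg x).ne').analyticAt

theorem two_mul_sin_half_mul_separatrixFactor_sq (hper : Periodic U (2 * π)) (h0 : U 0 = 0)
    (hneg : ∀ x ∈ Set.Ioo 0 (2 * π), U x < 0) (x : ℝ) :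
    (2 * sin (x / 2) * separatrixFactor U x) ^ 2 = -2 * U x := by
  rw [mul_pow, mul_pow, separatrixFactor, sq_sqrt (separatrixFactorSq_pos hper hneg x).le]
  linear_combination 2 * two_mul_sin_half_sq_mul_separatrixFactorSq hper h0 x

end Potential

/-- The separatrix function: for a real-analytic `2π`-periodic potential `U₁` with
a nondegenerate absolute maximum `U₁(0) = 0` (normalized `U₁″(0) = −1`) and
`U₁ < 0` on `(0, 2π)`, there is a real-analytic, `2π`-periodic, positive `ψ₁` with
`ψ₁(0) = 1` such that `ψ(x) = 2 sin(x/2) ψ₁(x)` satisfies `ψ² = −2U₁`,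
`ψ(x + 2π) = −ψ(x)` (hence `4π`-periodicity), `ψ(0) = 0`, `ψ′(0) = 1`, `ψ ≥ 0` on
`[0, 2π]`, and `ψ(x) = 0` iff `x ∈ 2πℤ`. -/
theorem separatrix_function
    (U₁ : ℝ → ℝ) (hA : ∀ x, AnalyticAt ℝ U₁ x)
    (hper : Function.Periodic U₁ (2 * Real.pi))
    (h0 : U₁ 0 = 0) (h1 : deriv U₁ 0 = 0) (h2 : deriv (deriv U₁) 0 = -1)
    (hneg : ∀ x ∈ Set.Ioo 0 (2 * Real.pi), U₁ x < 0) :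
    ∃ ψ₁ : ℝ → ℝ, (∀ x, AnalyticAt ℝ ψ₁ x) ∧
      Function.Periodic ψ₁ (2 * Real.pi) ∧
      ψ₁ 0 = 1 ∧ (∀ x, 0 < ψ₁ x) ∧
      (∀ x, (2 * Real.sin (x / 2) * ψ₁ x) ^ 2 = -2 * U₁ x) ∧
      (∀ x, 2 * Real.sin ((x + 2 * Real.pi) / 2) * ψ₁ (x + 2 * Real.pi)
          = -(2 * Real.sin (x / 2) * ψ₁ x)) ∧
      (∀ x, 2 * Real.sin ((x + 4 * Real.pi) / 2) * ψ₁ (x + 4 * Real.pi)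
          = 2 * Real.sin (x / 2) * ψ₁ x) ∧
      2 * Real.sin ((0 : ℝ) / 2) * ψ₁ 0 = 0 ∧
      deriv (fun x => 2 * Real.sin (x / 2) * ψ₁ x) 0 = 1 ∧
      (∀ x ∈ Set.Icc (0 : ℝ) (2 * Real.pi), 0 ≤ 2 * Real.sin (x / 2) * ψ₁ x) ∧
      (∀ x : ℝ, 2 * Real.sin (x / 2) * ψ₁ x = 0 ↔ ∃ k : ℤ, x = 2 * Real.pi * k) := by
  have hψA := analyticAt_separatrixFactor hA hper h0 h1 h2 hneg
  have hψper := separatrixFactor_periodic hper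
  have hψpos := separatrixFactor_pos hper hneg
  have hanti := antiperiodic_two_mul_sin_half_mul hψper
  refine ⟨separatrixFactor U₁, hψA, hψper, separatrixFactor_zero, hψpos,
    two_mul_sin_half_mul_separatrixFactor_sq hper h0 hneg, hanti, fun x => ?_, by simp, ?_,
    fun x => two_mul_sin_half_mul_nonneg fun y => (hψpos y).le,
    two_mul_sin_half_mul_eq_zero_iff hψpos⟩
  · simpa only [show 2 * (2 * π) = 4 * π by ring] using hanti.periodic_two_mul x
  · rw [deriv_two_mul_sin_half_mul_zero (hψA 0).differentiableAt, separatrixFactor_zero]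
end

section
/- Let m ≥ 1, let D ⊆ ℂ^m be open, let P ⊆ ℂ^m be open and convex, let H : P × D → ℂ be holomorphic, and let c₀ ∈ ℂ. Suppose S_a, S_b : D → ℂ are holomorphic with ∇S_a(q), ∇S_b(q) ∈ P for all q ∈ D, and both solve the Hamilton–Jacobi equation H(∇S_a(q), q) = c₀ and H(∇S_b(q), q) = c₀ on D. Then the difference 𝔖 := S_a − S_b satisfies the homogeneous linear first-order partial differential equation Σ_{j=1}^m A_j(q) ∂𝔖/∂q_j (q) = 0 on D, where A_j(q) = ∫_0^1 (∂H/∂p_j)(∇S_b(q) + t(∇S_a(q) − ∇S_b(q)), q) dt. -/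
open scoped BigOperators

noncomputable section

/-- The (complex) gradient of a function `S : ℂ^m → ℂ`: the vector of partial
derivatives `(∂S/∂q_1, …, ∂S/∂q_m)`. -/
def cgrad {m : ℕ} (S : (Fin m → ℂ) → ℂ) (q : Fin m → ℂ) : Fin m → ℂ :=
  fun j => fderiv ℂ S q (Pi.single j 1)

/-! The two Hamilton–Jacobi equations give `H(∇S_a(q), q) - H(∇S_b(q), q) = 0`. By the
fundamental theorem of calculus along the segment from `∇S_b(q)` to `∇S_a(q)`, which stays in
`P` by convexity, this difference is `Σ_j A_j(q) (∂_j S_a - ∂_j S_b)(q)`. The integrand is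
integrable because the Cauchy estimates bound `DH` on a compact neighbourhood of the segment. -/

open Set Metric MeasureTheory

section Holomorphic

variable {E : Type*} [NormedAddCommGroup E] [NormedSpace ℂ E]
  {F : Type*} [NormedAddCommGroup F] [NormedSpace ℂ F] {f : E → F}

theorem DifferentiableAt.hasDerivAt_comp_add_smul {x v : E} {z : ℂ}
    (hf : DifferentiableAt ℂ f (x + z • v)) :
    HasDerivAt (fun w : ℂ => f (x + w • v)) (fderiv ℂ f (x + z • v) v) z := by
  have hline : HasDerivAt (fun w : ℂ => x + w • v) v z := by
    simpa using ((hasDerivAt_id z).smul_const v).const_add x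
  exact hf.hasFDerivAt.comp_hasDerivAt z hline

theorem norm_fderiv_le_of_forall_mem_closedBall_norm_le {x : E} {r M : ℝ} (hr : 0 < r)
    (hf : DifferentiableOn ℂ f (closedBall x r)) (hM : ∀ y ∈ closedBall x r, ‖f y‖ ≤ M) :
    ‖fderiv ℂ f x‖ ≤ M / r := by
  have hM₀ : 0 ≤ M := (norm_nonneg _).trans (hM x (mem_closedBall_self hr.le))
  refine ContinuousLinearMap.opNorm_le_of_unit_norm (div_nonneg hM₀ hr.le) fun v hv => ?_
  have hmaps : MapsTo (fun z : ℂ => x + z • v) (closedBall 0 r) (closedBall x r) := by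
    intro z hz
    simpa [norm_smul, hv] using hz
  have hfx : DifferentiableAt ℂ f (x + (0 : ℂ) • v) := by
    simpa using hf.differentiableAt (closedBall_mem_nhds x hr)
  have hcauchy : ‖deriv (fun w : ℂ => f (x + w • v)) 0‖ ≤ M / r :=
    Complex.norm_deriv_le_of_forall_mem_sphere_norm_le hr
      ((hf.comp (by fun_prop) hmaps).diffContOnCl_ball subset_rfl)
      fun z hz => hM _ (hmaps (sphere_subset_closedBall hz))
  rwa [hfx.hasDerivAt_comp_add_smul.deriv, zero_smul, add_zero] at hcauchy

theorem IsCompact.exists_bound_norm_fderiv [ProperSpace E] {U K : Set E} (hU : IsOpen U)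
    (hf : DifferentiableOn ℂ f U) (hK : IsCompact K) (hKU : K ⊆ U) :
    ∃ C, ∀ x ∈ K, ‖fderiv ℂ f x‖ ≤ C := by
  obtain ⟨δ, hδ, hδU⟩ := hK.exists_cthickening_subset_open hU hKU
  obtain ⟨M, hM⟩ := hK.cthickening.exists_bound_of_continuousOn (hf.continuousOn.mono hδU)
  refine ⟨M / δ, fun x hx => norm_fderiv_le_of_forall_mem_closedBall_norm_le hδ
    (hf.mono ((closedBall_subset_cthickening hx δ).trans hδU))
    fun y hy => hM y (closedBall_subset_cthickening hx δ hy)⟩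

theorem intervalIntegrable_fderiv_comp [FiniteDimensional ℂ E] [MeasurableSpace E] [BorelSpace E]
    [FiniteDimensional ℂ F] {U : Set E} (hU : IsOpen U) (hf : DifferentiableOn ℂ f U)
    {c : ℝ → E} {a b : ℝ} (hc : Continuous c) (hcU : MapsTo c (uIcc a b) U) :
    IntervalIntegrable (fun t => fderiv ℂ f (c t)) volume a b := by
  obtain ⟨C, hC⟩ := (isCompact_uIcc.image hc).exists_bound_norm_fderiv hU hf
    (image_subset_iff.mpr hcU)
  refine (Measure.integrableOn_of_bounded (M := C) measure_Icc_lt_top.ne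
    ((measurable_fderiv ℂ f).comp hc.measurable).aestronglyMeasurable ?_).intervalIntegrable
  exact (ae_restrict_iff' measurableSet_Icc).mpr
    (.of_forall fun t ht => hC _ (mem_image_of_mem c ht))

end Holomorphic

theorem sum_smul_apply_single {ι M : Type*} [Fintype ι] [DecidableEq ι] [AddCommMonoid M]
    [Module ℂ M] (L : (ι → ℂ) →ₗ[ℂ] M) (v : ι → ℂ) : ∑ j, v j • L (Pi.single j 1) = L v := by
  conv_rhs => rw [← Finset.univ_sum_single v, map_sum]
  refine Finset.sum_congr rfl fun j _ => ?_
  rw [← map_smul, ← Pi.single_smul', smul_eq_mul, mul_one]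

section Segment

variable {E : Type*} [NormedAddCommGroup E] [NormedSpace ℂ E] [FiniteDimensional ℂ E]
  [MeasurableSpace E] [BorelSpace E] {f : E → ℂ} {U : Set E} {x v : E}

theorem intervalIntegrable_fderiv_segment (hU : IsOpen U) (hf : DifferentiableOn ℂ f U)
    (hseg : ∀ t ∈ Icc (0 : ℝ) 1, x + (t : ℂ) • v ∈ U) :
    IntervalIntegrable (fun t : ℝ => fderiv ℂ f (x + (t : ℂ) • v)) volume 0 1 :=
  intervalIntegrable_fderiv_comp hU hf (by fun_prop) (by rwa [uIcc_of_le zero_le_one])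

theorem integral_fderiv_segment_apply (hU : IsOpen U) (hf : DifferentiableOn ℂ f U)
    (hseg : ∀ t ∈ Icc (0 : ℝ) 1, x + (t : ℂ) • v ∈ U) :
    (∫ t in (0 : ℝ)..1, fderiv ℂ f (x + (t : ℂ) • v)) v = f (x + v) - f x := by
  have hint := intervalIntegrable_fderiv_segment hU hf hseg
  have hderiv : ∀ t ∈ uIcc (0 : ℝ) 1,
      HasDerivAt (fun s : ℝ => f (x + (s : ℂ) • v)) (fderiv ℂ f (x + (t : ℂ) • v) v) t := by
    intro t ht
    rw [uIcc_of_le zero_le_one] at ht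
    exact ((hf _ (hseg t ht)).differentiableAt
      (hU.mem_nhds (hseg t ht))).hasDerivAt_comp_add_smul.comp_ofReal
  rw [ContinuousLinearMap.intervalIntegral_apply hint,
    intervalIntegral.integral_eq_sub_of_hasDerivAt hderiv
      ⟨hint.1.apply_continuousLinearMap v, hint.2.apply_continuousLinearMap v⟩]
  simp

end Segment

theorem sum_integral_fderiv_inl_single_mul {ι G : Type*} [Fintype ι] [DecidableEq ι]
    [NormedAddCommGroup G] [NormedSpace ℂ G] [FiniteDimensional ℂ G] [MeasurableSpace G]
    [BorelSpace G] {f : (ι → ℂ) × G → ℂ} {U : Set ((ι → ℂ) × G)} (hU : IsOpen U)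
    (hf : DifferentiableOn ℂ f U) {p p' : ι → ℂ} {y : G}
    (hseg : ∀ t ∈ Icc (0 : ℝ) 1, (p + (t : ℂ) • (p' - p), y) ∈ U) :
    ∑ j, (∫ t in (0 : ℝ)..1, fderiv ℂ f (p + (t : ℂ) • (p' - p), y) (Pi.single j 1, 0)) *
      (p' - p) j = f (p', y) - f (p, y) := by
  have hline : ∀ t : ℂ, (p, y) + t • (p' - p, (0 : G)) = (p + t • (p' - p), y) := by
    simp
  have hend : (p, y) + (p' - p, (0 : G)) = (p', y) := by simp
  simp_rw [← hline] at hseg ⊢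
  have hint := intervalIntegrable_fderiv_segment hU hf hseg
  set L := ∫ t in (0 : ℝ)..1, fderiv ℂ f ((p, y) + (t : ℂ) • (p' - p, (0 : G)))
  calc ∑ j, (∫ t in (0 : ℝ)..1, fderiv ℂ f ((p, y) + (t : ℂ) • (p' - p, (0 : G)))
          (Pi.single j 1, 0)) * (p' - p) j
      = ∑ j, (p' - p) j • (L.comp (.inl ℂ _ G)).toLinearMap (Pi.single j 1) := by
        refine Finset.sum_congr rfl fun j _ => ?_
        rw [← ContinuousLinearMap.intervalIntegral_apply hint, smul_eq_mul, mul_comm]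
        rfl
    _ = L (p' - p, 0) := sum_smul_apply_single _ _
    _ = f (p', y) - f (p, y) := by rw [integral_fderiv_segment_apply hU hf hseg, hend]

theorem hamilton_jacobi_difference_general (m : ℕ)
    (D P : Set (Fin m → ℂ)) (hD : IsOpen D) (hP : IsOpen P) (hPc : Convex ℝ P)
    (H : (Fin m → ℂ) × (Fin m → ℂ) → ℂ)
    (hH : DifferentiableOn ℂ H (P ×ˢ D))
    (c₀ : ℂ)
    (Sa Sb : (Fin m → ℂ) → ℂ)
    (hSa : DifferentiableOn ℂ Sa D) (hSb : DifferentiableOn ℂ Sb D)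
    (hga : ∀ q ∈ D, cgrad Sa q ∈ P)
    (hgb : ∀ q ∈ D, cgrad Sb q ∈ P)
    (hHJa : ∀ q ∈ D, H (cgrad Sa q, q) = c₀)
    (hHJb : ∀ q ∈ D, H (cgrad Sb q, q) = c₀) :
    ∀ q ∈ D,
      (∑ j : Fin m,
        (∫ t in (0 : ℝ)..1,
          fderiv ℂ H
            (cgrad Sb q + (t : ℂ) • (cgrad Sa q - cgrad Sb q), q)
            (Pi.single j 1, (0 : Fin m → ℂ))) *
        fderiv ℂ (fun q' => Sa q' - Sb q') q (Pi.single j 1)) = 0 := by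
  intro q hq
  have hgrad_sub : ∀ j, fderiv ℂ (fun q' => Sa q' - Sb q') q (Pi.single j 1) =
      (cgrad Sa q - cgrad Sb q) j := by
    intro j
    rw [fderiv_fun_sub ((hSa q hq).differentiableAt (hD.mem_nhds hq))
      ((hSb q hq).differentiableAt (hD.mem_nhds hq))]
    rfl
  have hseg : ∀ t ∈ Icc (0 : ℝ) 1,
      (cgrad Sb q + (t : ℂ) • (cgrad Sa q - cgrad Sb q), q) ∈ P ×ˢ D := fun t ht =>
    ⟨by simpa only [Complex.coe_smul] using hPc.add_smul_sub_mem (hgb q hq) (hga q hq) ht, hq⟩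
  simp_rw [hgrad_sub]
  rw [sum_integral_fderiv_inl_single_mul (hP.prod hD) hH hseg, hHJa q hq, hHJb q hq, sub_self]

/-- Lemma 4.2 (identity for the splitting potential): if `S_a` and `S_b` are two
holomorphic solutions of the same Hamilton–Jacobi equation `H(∇S, q) = c₀` on `D`
with gradients in the open convex set `P`, then `𝔖 = S_a − S_b` satisfies a
homogeneous linear first-order PDE `Σ_j A_j(q) ∂𝔖/∂q_j = 0`, where
`A_j(q) = ∫₀¹ (∂H/∂p_j)(∇S_b(q) + t(∇S_a(q) − ∇S_b(q)), q) dt`. -/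
theorem hamilton_jacobi_difference (m : ℕ) (hm : 1 ≤ m)
    (D P : Set (Fin m → ℂ)) (hD : IsOpen D) (hP : IsOpen P) (hPc : Convex ℝ P)
    (H : (Fin m → ℂ) × (Fin m → ℂ) → ℂ)
    (hH : DifferentiableOn ℂ H (P ×ˢ D))
    (c₀ : ℂ)
    (Sa Sb : (Fin m → ℂ) → ℂ)
    (hSa : DifferentiableOn ℂ Sa D) (hSb : DifferentiableOn ℂ Sb D)
    (hga : ∀ q ∈ D, cgrad Sa q ∈ P)
    (hgb : ∀ q ∈ D, cgrad Sb q ∈ P)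
    (hHJa : ∀ q ∈ D, H (cgrad Sa q, q) = c₀)
    (hHJb : ∀ q ∈ D, H (cgrad Sb q, q) = c₀) :
    ∀ q ∈ D,
      (∑ j : Fin m,
        (∫ t in (0 : ℝ)..1,
          fderiv ℂ H
            (cgrad Sb q + (t : ℂ) • (cgrad Sa q - cgrad Sb q), q)
            (Pi.single j 1, (0 : Fin m → ℂ))) *
        fderiv ℂ (fun q' => Sa q' - Sb q') q (Pi.single j 1)) = 0 :=
  hamilton_jacobi_difference_general m D P hD hP hPc H hH c₀ Sa Sb hSa hSb hga hgb hHJa hHJb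
end
end
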